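/- The generalized Sawada–Kotera Hamiltonian H_SK and the quartic integral K_SK are in involution with respect to the canonical Poisson bracket: {H_SK, K_SK}₀ = 0 at every point of ℝ⁴ with y ≠ 0. Moreover, the cubic quantity K_{SK,0} = 3p_x·p_y + a·y³ + 3a·x²y + 3ω·x·y satisfies {H_SK, K_{SK,0}}₀ = −3μ·p_x/y³, so K_{SK,0} is a first integral if and only if μ = 0. -/

import Mathlib

/-!
Write `K_SK = K_{SK,0}² + μ K₁` with `K₁ = 9p_x²/y² + 12a·x`. Direct computation gives
`{H_SK, K_{SK,0}}₀ = −3μp_x/y³` and `{H_SK, K₁}₀ = 6p_x K_{SK,0}/y³`, so by the Leibniz rule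
`{H_SK, K_SK}₀ = 2K_{SK,0}·(−3μp_x/y³) + μ·6p_x K_{SK,0}/y³ = 0`.
-/

/-- Canonical Poisson bracket on ℝ⁴ with coordinates `(p_x, p_y, x, y)`. -/
noncomputable def pbracket (f g : ℝ → ℝ → ℝ → ℝ → ℝ) (px py x y : ℝ) : ℝ :=
    (deriv (fun t => f px py t y) x) * (deriv (fun t => g t py x y) px)
  - (deriv (fun t => f t py x y) px) * (deriv (fun t => g px py t y) x)
  + (deriv (fun t => f px py x t) y) * (deriv (fun t => g px t x y) py)
  - (deriv (fun t => f px t x y) py) * (deriv (fun t => g px py x t) y)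

/-- The generalized Sawada–Kotera Hamiltonian. -/
noncomputable def HSK (a ω μ : ℝ) (px py x y : ℝ) : ℝ :=
  (1/2)*(px^2 + py^2) + (ω/2)*(x^2 + y^2) + a*x*y^2 + (a/3)*x^3 + μ/(2*y^2)

/-- The quartic Sawada–Kotera integral. -/
noncomputable def KSK (a ω μ : ℝ) (px py x y : ℝ) : ℝ :=
  (3*px*py + a*y^3 + 3*a*x^2*y + 3*ω*x*y)^2 + μ*(9*px^2/y^2 + 12*a*x)

/-- The cubic quantity `K_{SK,0}`. -/
noncomputable def KSK0 (a ω : ℝ) (px py x y : ℝ) : ℝ :=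
  3*px*py + a*y^3 + 3*a*x^2*y + 3*ω*x*y

structure HasPartialDerivs (f : ℝ → ℝ → ℝ → ℝ → ℝ) (px py x y dpx dpy dx dy : ℝ) : Prop where
  hasDerivAt_px : HasDerivAt (fun t => f t py x y) dpx px
  hasDerivAt_py : HasDerivAt (fun t => f px t x y) dpy py
  hasDerivAt_x : HasDerivAt (fun t => f px py t y) dx x
  hasDerivAt_y : HasDerivAt (fun t => f px py x t) dy y

namespace HasPartialDerivs

variable {f g : ℝ → ℝ → ℝ → ℝ → ℝ} {px py x y fpx fpy fx fy gpx gpy gx gy : ℝ}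

theorem pbracket_eq (hf : HasPartialDerivs f px py x y fpx fpy fx fy)
    (hg : HasPartialDerivs g px py x y gpx gpy gx gy) :
    pbracket f g px py x y = fx * gpx - fpx * gx + fy * gpy - fpy * gy := by
  rw [pbracket, hf.hasDerivAt_px.deriv, hf.hasDerivAt_py.deriv, hf.hasDerivAt_x.deriv,
    hf.hasDerivAt_y.deriv, hg.hasDerivAt_px.deriv, hg.hasDerivAt_py.deriv,
    hg.hasDerivAt_x.deriv, hg.hasDerivAt_y.deriv]

theorem add (hf : HasPartialDerivs f px py x y fpx fpy fx fy)
    (hg : HasPartialDerivs g px py x y gpx gpy gx gy) :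
    HasPartialDerivs (fun px py x y => f px py x y + g px py x y) px py x y
      (fpx + gpx) (fpy + gpy) (fx + gx) (fy + gy) :=
  ⟨hf.1.add hg.1, hf.2.add hg.2, hf.3.add hg.3, hf.4.add hg.4⟩

theorem const_mul (c : ℝ) (hf : HasPartialDerivs f px py x y fpx fpy fx fy) :
    HasPartialDerivs (fun px py x y => c * f px py x y) px py x y
      (c * fpx) (c * fpy) (c * fx) (c * fy) :=
  ⟨hf.1.const_mul c, hf.2.const_mul c, hf.3.const_mul c, hf.4.const_mul c⟩

theorem pow (n : ℕ) (hf : HasPartialDerivs f px py x y fpx fpy fx fy) :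
    HasPartialDerivs (fun px py x y => f px py x y ^ n) px py x y
      (n * f px py x y ^ (n - 1) * fpx) (n * f px py x y ^ (n - 1) * fpy)
      (n * f px py x y ^ (n - 1) * fx) (n * f px py x y ^ (n - 1) * fy) :=
  ⟨hf.1.pow n, hf.2.pow n, hf.3.pow n, hf.4.pow n⟩

end HasPartialDerivs

theorem pbracket_sq_add_const_mul {f g w : ℝ → ℝ → ℝ → ℝ → ℝ}
    {px py x y fpx fpy fx fy gpx gpy gx gy wpx wpy wx wy : ℝ} (c : ℝ)
    (hf : HasPartialDerivs f px py x y fpx fpy fx fy)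
    (hg : HasPartialDerivs g px py x y gpx gpy gx gy)
    (hw : HasPartialDerivs w px py x y wpx wpy wx wy) :
    pbracket f (fun px py x y => g px py x y ^ 2 + c * w px py x y) px py x y
      = 2 * g px py x y * pbracket f g px py x y + c * pbracket f w px py x y := by
  rw [hf.pbracket_eq ((hg.pow 2).add (hw.const_mul c)), hf.pbracket_eq hg, hf.pbracket_eq hw]
  norm_num
  ring

noncomputable def KSK1 (a : ℝ) (px _ x y : ℝ) : ℝ :=
  9*px^2/y^2 + 12*a*x

theorem KSK_eq (a ω μ : ℝ) :
    KSK a ω μ = fun px py x y => KSK0 a ω px py x y ^ 2 + μ * KSK1 a px py x y :=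
  rfl

section partials

variable (a ω μ px py x y : ℝ)

theorem hasPartialDerivs_HSK (hy : y ≠ 0) :
    HasPartialDerivs (HSK a ω μ) px py x y
      px py (a*y^2 + ω*x + a*x^2) (ω*y + 2*a*x*y - μ/y^3) where
  hasDerivAt_px :=
    ((((((hasDerivAt_pow 2 px).add_const (py^2)).const_mul (1/2)).add_const _).add_const _).add_const
      _).add_const _ |>.congr_deriv (by ring)
  hasDerivAt_py :=
    ((((((hasDerivAt_pow 2 py).const_add (px^2)).const_mul (1/2)).add_const _).add_const _).add_const
      _).add_const _ |>.congr_deriv (by ring)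
  hasDerivAt_x :=
    ((((((hasDerivAt_pow 2 x).add_const (y^2)).const_mul (ω/2)).const_add _).add
      (((hasDerivAt_id' x).const_mul a).mul_const (y^2))).add
      ((hasDerivAt_pow 3 x).const_mul (a/3))).add_const _ |>.congr_deriv (by ring)
  hasDerivAt_y :=
    ((((((hasDerivAt_pow 2 y).const_add (x^2)).const_mul (ω/2)).const_add _).add
      ((hasDerivAt_pow 2 y).const_mul (a*x))).add_const _).add
      ((hasDerivAt_const y μ).div ((hasDerivAt_pow 2 y).const_mul 2) (by positivity))
      |>.congr_deriv (by field_simp; ring)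

theorem hasPartialDerivs_KSK0 :
    HasPartialDerivs (KSK0 a ω) px py x y
      (3*py) (3*px) (6*a*x*y + 3*ω*y) (3*a*y^2 + 3*a*x^2 + 3*ω*x) where
  hasDerivAt_px :=
    (((((hasDerivAt_id' px).const_mul 3).mul_const py).add_const _).add_const _).add_const _
      |>.congr_deriv (by ring)
  hasDerivAt_py :=
    ((((hasDerivAt_id' py).const_mul (3*px)).add_const _).add_const _).add_const _
      |>.congr_deriv (by ring)
  hasDerivAt_x :=
    ((((hasDerivAt_pow 2 x).const_mul (3*a)).mul_const y).const_add _).add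
      (((hasDerivAt_id' x).const_mul (3*ω)).mul_const y) |>.congr_deriv (by ring)
  hasDerivAt_y :=
    ((((hasDerivAt_pow 3 y).const_mul a).const_add _).add
      ((hasDerivAt_id' y).const_mul (3*a*x^2))).add ((hasDerivAt_id' y).const_mul (3*ω*x))
      |>.congr_deriv (by ring)

theorem hasPartialDerivs_KSK1 (hy : y ≠ 0) :
    HasPartialDerivs (KSK1 a) px py x y (18*px/y^2) 0 (12*a) (-18*px^2/y^3) where
  hasDerivAt_px :=
    (((hasDerivAt_pow 2 px).const_mul 9).div_const (y^2)).add_const _ |>.congr_deriv (by ring)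
  hasDerivAt_py := hasDerivAt_const py _
  hasDerivAt_x := ((hasDerivAt_id' x).const_mul (12*a)).const_add _ |>.congr_deriv (by ring)
  hasDerivAt_y :=
    ((hasDerivAt_const y (9*px^2)).div (hasDerivAt_pow 2 y) (pow_ne_zero 2 hy)).add_const _
      |>.congr_deriv (by field_simp; ring)

end partials

theorem pbracket_HSK_KSK0 (a ω μ px py x y : ℝ) (hy : y ≠ 0) :
    pbracket (HSK a ω μ) (KSK0 a ω) px py x y = -3*μ*px/y^3 := by
  rw [(hasPartialDerivs_HSK a ω μ px py x y hy).pbracket_eq (hasPartialDerivs_KSK0 a ω px py x y)]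
  field_simp
  ring

theorem pbracket_HSK_KSK1 (a ω μ px py x y : ℝ) (hy : y ≠ 0) :
    pbracket (HSK a ω μ) (KSK1 a) px py x y = 6*px*KSK0 a ω px py x y/y^3 := by
  rw [(hasPartialDerivs_HSK a ω μ px py x y hy).pbracket_eq (hasPartialDerivs_KSK1 a px py x y hy),
    KSK0]
  field_simp
  ring

theorem pbracket_HSK_KSK (a ω μ px py x y : ℝ) (hy : y ≠ 0) :
    pbracket (HSK a ω μ) (KSK a ω μ) px py x y = 0 := by
  rw [KSK_eq, pbracket_sq_add_const_mul μ (hasPartialDerivs_HSK a ω μ px py x y hy)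
    (hasPartialDerivs_KSK0 a ω px py x y) (hasPartialDerivs_KSK1 a px py x y hy),
    pbracket_HSK_KSK0 a ω μ px py x y hy, pbracket_HSK_KSK1 a ω μ px py x y hy]
  ring

/-- `{H_SK, K_SK}₀ = 0` on `{y ≠ 0}`, while
`{H_SK, K_{SK,0}}₀ = −3μp_x/y³`, so that `K_{SK,0}` is a first integral iff `μ = 0`. -/
theorem SK_involution (a ω μ : ℝ) :
    (∀ px py x y : ℝ, y ≠ 0 →
        pbracket (HSK a ω μ) (KSK a ω μ) px py x y = 0)
    ∧ (∀ px py x y : ℝ, y ≠ 0 →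
        pbracket (HSK a ω μ) (fun px' py' x' y' => KSK0 a ω px' py' x' y') px py x y
          = -3*μ*px/y^3)
    ∧ ((∀ px py x y : ℝ, y ≠ 0 →
        pbracket (HSK a ω μ) (fun px' py' x' y' => KSK0 a ω px' py' x' y') px py x y = 0)
        ↔ μ = 0) := by
  refine ⟨pbracket_HSK_KSK a ω μ, pbracket_HSK_KSK0 a ω μ, fun h => ?_, fun hμ px py x y hy => ?_⟩
  · have hμ_mul := (pbracket_HSK_KSK0 a ω μ 1 0 0 1 one_ne_zero).symm.trans (h 1 0 0 1 one_ne_zero)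
    linarith
  · rw [pbracket_HSK_KSK0 a ω μ px py x y hy, hμ]
    ring
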